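/- arXiv:2212.13084 — 2 statements merged into one kernel-verified Lean document; each statement's English description precedes it below -/
import Mathlib

section
/- Converse moment characterization: Suppose Y is an absolutely continuous random variable with CDF F_Y supported on (a,b), F_0 is an absolutely continuous strictly increasing CDF on (a,b), A(y) = -log F_0(y), and there exists θ > 0 such that E[A(Y)^n | Y ≤ y] = A(y)^n + (n/θ)E[A(Y)^{n-1} | Y ≤ y] holds for some fixed integer n ≥ 1 and all y ∈ (a,b). Then the reversed hazard rate of Y equals θ times that of F_0, i.e., f_Y(y)/F_Y(y) = θ·f_0(y)/F_0(y) for all y ∈ (a,b). -/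
/-!
Write `M k x = ∫_a^x A^k f_Y`, so that `E[A(Y)^k | Y ≤ x] = M k x / F_Y x`. The hypothesis reads
`M (m+1) = A^(m+1) F_Y + ((m+1)/θ) M m` on `(a,b)`. Differentiating with `A' = -f₀/F₀`, the terms
`A^(m+1) f_Y` cancel and what is left is `((m+1)/θ) A^m f_Y = (m+1) A^m (f₀/F₀) F_Y`, the claim.

The work is in the differentiation: `f_Y` is a pointwise derivative but need not be continuous,
so `(M k)' = A^k f_Y` comes from integrating by parts against `F_Y`; the remainder is
`o(x - z)` because `|(A^k)'| ≲ f₀` near `z` and `∫_z^x f₀ = F₀ x - F₀ z = O(x - z)`.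
If `A^k f_Y` is not integrable on some `(a, x)`, Lean's junk value makes `M k` vanish on all of
`(a,b)`, and the recursion then forces either `f₀ ≡ 0`, against strict monotonicity of `F₀`, or
`M m < 0` although its integrand is nonnegative.
-/

open Set Filter Topology MeasureTheory Asymptotics intervalIntegral

theorem intervalIntegrable_or_integral_eq_zero {g : ℝ → ℝ} {a b : ℝ}
    (hg : ∀ l ∈ Ioo a b, ∀ r ∈ Ioo a b, IntervalIntegrable g volume l r) :
    (∀ x ∈ Ioo a b, IntervalIntegrable g volume a x) ∨ ∀ x ∈ Ioo a b, ∫ t in a..x, g t = 0 :=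
  or_iff_not_imp_left.2 fun h x hx =>
    integral_undef fun hx' => h fun y hy => hx'.trans (hg x hx y hy)

theorem StrictMonoOn.exists_hasDerivAt_pos {F f : ℝ → ℝ} {a b : ℝ} (hab : a < b)
    (hF : StrictMonoOn F (Ioo a b)) (hderiv : ∀ t ∈ Ioo a b, HasDerivAt F (f t) t) :
    ∃ t ∈ Ioo a b, 0 < f t := by
  obtain ⟨l, hal, hlb⟩ := exists_between hab
  obtain ⟨r, hlr, hrb⟩ := exists_between hlb
  have hsub : Icc l r ⊆ Ioo a b := Icc_subset_Ioo hal hrb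
  obtain ⟨t, ht, hslope⟩ := exists_hasDerivAt_eq_slope F f hlr
    (fun t ht => (hderiv t (hsub ht)).continuousAt.continuousWithinAt)
    (fun t ht => hderiv t (hsub (Ioo_subset_Icc_self ht)))
  refine ⟨t, hsub (Ioo_subset_Icc_self ht), hslope ▸ div_pos ?_ (sub_pos.2 hlr)⟩
  exact sub_pos.2 (hF ⟨hal, hlb⟩ ⟨hal.trans hlr, hrb⟩ hlr)

theorem HasDerivAt.nonneg_of_monotoneOn_of_mem_nhds {g : ℝ → ℝ} {g' x : ℝ} {s : Set ℝ}
    (hd : HasDerivAt g g' x) (hs : s ∈ 𝓝 x) (hg : MonotoneOn g s) : 0 ≤ g' := by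
  refine hd.hasDerivWithinAt.nonneg_of_monotoneOn ?_ hg
  rw [accPt_principal_iff_nhdsWithin, sdiff_eq,
    nhdsWithin_inter_of_mem (mem_nhdsWithin_of_mem_nhds hs)]
  infer_instance

theorem hasDerivAt_zero_of_forall_mem_Ioo {g : ℝ → ℝ} {a b z : ℝ}
    (h : ∀ x ∈ Ioo a b, g x = 0) (hz : z ∈ Ioo a b) : HasDerivAt g 0 z :=
  (hasDerivAt_const z 0).congr_of_eventuallyEq (eventually_of_mem (Ioo_mem_nhds hz.1 hz.2) h)

theorem eventually_forall_uIcc {α : Type*} [LinearOrder α] [TopologicalSpace α] [OrderTopology α]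
    {P : α → Prop} {z : α} (h : ∀ᶠ t in 𝓝 z, P t) : ∀ᶠ x in 𝓝 z, ∀ t ∈ uIcc z x, P t :=
  (tendsto_const_nhds.uIcc tendsto_id).eventually (eventually_smallSets_forall.2 h)

theorem intervalIntegrable_deriv_of_nonneg_Ioo {W w : ℝ → ℝ} {c d l r : ℝ}
    (hW : ∀ t ∈ Ioo c d, HasDerivAt W (w t) t) (hw : ∀ t ∈ Ioo c d, 0 ≤ w t)
    (hl : l ∈ Ioo c d) (hr : r ∈ Ioo c d) : IntervalIntegrable w volume l r := by
  have hsub : uIcc l r ⊆ Ioo c d := ordConnected_Ioo.uIcc_subset hl hr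
  exact intervalIntegrable_deriv_of_nonneg
    (fun t ht => (hW t (hsub ht)).continuousAt.continuousWithinAt)
    (fun t ht => hW t (hsub (Ioo_subset_Icc_self ht)))
    (fun t ht => hw t (hsub (Ioo_subset_Icc_self ht)))

theorem isLittleO_integral_mul_sub_self {g v : ℝ → ℝ} {z : ℝ} (hv : ContinuousAt v z)
    (hg : ∀ᶠ x in 𝓝 z, IntervalIntegrable g volume z x)
    (hO : (fun x => ∫ t in z..x, |g t|) =O[𝓝 z] fun x => x - z) :
    (fun x => ∫ t in z..x, g t * (v t - v z)) =o[𝓝 z] fun x => x - z := by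
  obtain ⟨C, hC, hCbound⟩ := hO.exists_pos
  refine isLittleO_iff.2 fun ε hε => ?_
  have hclose : ∀ᶠ t in 𝓝 z, |v t - v z| ≤ ε / C :=
    (Metric.tendsto_nhds.1 hv _ (by positivity)).mono fun t ht => ht.le
  filter_upwards [eventually_forall_uIcc hclose, hg, hCbound.bound] with x hvx hgx hx
  calc ‖∫ t in z..x, g t * (v t - v z)‖ ≤ |(∫ t in z..x, ε / C * |g t|)| := by
        refine norm_integral_le_abs_of_norm_le ?_ (hgx.abs.const_mul _)
        refine ae_restrict_of_forall_mem measurableSet_uIoc fun t ht => ?_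
        rw [norm_mul, Real.norm_eq_abs, mul_comm]
        exact mul_le_mul_of_nonneg_right (hvx t (uIoc_subset_uIcc ht)) (abs_nonneg _)
    _ = ε / C * ‖∫ t in z..x, |g t|‖ := by
        rw [intervalIntegral.integral_const_mul, abs_mul, abs_of_pos (by positivity),
          Real.norm_eq_abs]
    _ ≤ ε / C * (C * ‖x - z‖) := by gcongr
    _ = ε * ‖x - z‖ := by field_simp

theorem hasDerivAt_integral_mul_deriv_of_isBigO {u u' v v' : ℝ → ℝ} {c d z : ℝ} (hz : z ∈ Ioo c d)
    (hu : ∀ t ∈ Ioo c d, HasDerivAt u (u' t) t) (hv : ∀ t ∈ Ioo c d, HasDerivAt v (v' t) t)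
    (hu'int : ∀ x ∈ Ioo c d, IntervalIntegrable u' volume z x)
    (hv'int : ∀ x ∈ Ioo c d, IntervalIntegrable v' volume z x)
    (hO : (fun x => ∫ t in z..x, |u' t|) =O[𝓝 z] fun x => x - z) :
    HasDerivAt (fun x => ∫ t in z..x, u t * v' t) (u z * v' z) z := by
  have hnhds : Ioo c d ∈ 𝓝 z := Ioo_mem_nhds hz.1 hz.2
  have hparts : ∀ x ∈ Ioo c d, ∫ t in z..x, u t * v' t
      = u x * (v x - v z) - ∫ t in z..x, u' t * (v t - v z) := by
    intro x hx
    have hsub := ordConnected_Ioo.uIcc_subset hz hx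
    rw [integral_mul_deriv_eq_deriv_mul (fun t ht => hu t (hsub ht))
      (fun t ht => (hv t (hsub ht)).sub_const (v z)) (hu'int x hx) (hv'int x hx)]
    ring
  have hrem : HasDerivAt (fun x => ∫ t in z..x, u' t * (v t - v z)) 0 z := by
    rw [hasDerivAt_iff_isLittleO]
    simpa using isLittleO_integral_mul_sub_self (hv z hz).continuousAt
      (eventually_of_mem hnhds hu'int) hO
  have hprod : HasDerivAt (fun x => u x * (v x - v z)) (u z * v' z) z := by
    simpa using (hu z hz).fun_mul ((hv z hz).sub_const (v z))
  simpa using (hprod.sub hrem).congr_of_eventuallyEq (eventually_of_mem hnhds hparts)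

theorem isBigO_integral_abs_mul_deriv {φ w W : ℝ → ℝ} {c d z : ℝ} (hz : z ∈ Ioo c d)
    (hφ : ContinuousAt φ z) (hW : ∀ t ∈ Ioo c d, HasDerivAt W (w t) t)
    (hw : ∀ t ∈ Ioo c d, 0 ≤ w t) :
    (fun x => ∫ t in z..x, |φ t * w t|) =O[𝓝 z] fun x => x - z := by
  have hnhds : Ioo c d ∈ 𝓝 z := Ioo_mem_nhds hz.1 hz.2
  have hφbound : ∀ᶠ t in 𝓝 z, |φ t| < |φ z| + 1 :=
    hφ.abs.eventually_lt_const (lt_add_one _)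
  have hFTC : (fun x => ∫ t in z..x, w t) =ᶠ[𝓝 z] fun x => W x - W z := by
    filter_upwards [hnhds] with x hx
    exact integral_eq_sub_of_hasDerivAt
      (fun t ht => hW t (ordConnected_Ioo.uIcc_subset hz hx ht))
      (intervalIntegrable_deriv_of_nonneg_Ioo hW hw hz hx)
  refine IsBigO.trans ?_ ((hW z hz).isBigO_sub.congr' hFTC.symm EventuallyEq.rfl)
  refine IsBigO.of_bound (|φ z| + 1) ?_
  filter_upwards [eventually_forall_uIcc (hφbound.and hnhds), hnhds] with x hx hxcd
  calc ‖∫ t in z..x, |φ t * w t|‖ ≤ |∫ t in z..x, (|φ z| + 1) * w t| := by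
        refine norm_integral_le_abs_of_norm_le ?_
          ((intervalIntegrable_deriv_of_nonneg_Ioo hW hw hz hxcd).const_mul _)
        refine ae_restrict_of_forall_mem measurableSet_uIoc fun t ht => ?_
        obtain ⟨htφ, htcd⟩ := hx t (uIoc_subset_uIcc ht)
        rw [Real.norm_eq_abs, abs_abs, abs_mul, abs_of_nonneg (hw t htcd)]
        exact mul_le_mul_of_nonneg_right htφ.le (hw t htcd)
    _ = (|φ z| + 1) * ‖∫ t in z..x, w t‖ := by
        rw [intervalIntegral.integral_const_mul, abs_mul, abs_of_pos (by positivity),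
          Real.norm_eq_abs]

theorem hasDerivAt_integral_mul_deriv {u v v' φ w W : ℝ → ℝ} {a b z : ℝ} (hz : z ∈ Ioo a b)
    (hu : ∀ t ∈ Ioo a b, HasDerivAt u (φ t * w t) t) (hφ : ContinuousOn φ (Ioo a b))
    (hW : ∀ t ∈ Ioo a b, HasDerivAt W (w t) t) (hw : ∀ t ∈ Ioo a b, 0 ≤ w t)
    (hv : ∀ t ∈ Ioo a b, HasDerivAt v (v' t) t)
    (hv' : ∀ l ∈ Ioo a b, ∀ r ∈ Ioo a b, IntervalIntegrable v' volume l r)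
    (hint : IntervalIntegrable (fun t => u t * v' t) volume a z) :
    HasDerivAt (fun x => ∫ t in a..x, u t * v' t) (u z * v' z) z := by
  have hucont : ContinuousOn u (Ioo a b) := fun t ht => (hu t ht).continuousAt.continuousWithinAt
  have hsplit : ∀ x ∈ Ioo a b, ∫ t in a..x, u t * v' t
      = (∫ t in a..z, u t * v' t) + ∫ t in z..x, u t * v' t := fun x hx =>
    (integral_add_adjacent_intervals hint
      ((hv' z hz x hx).continuousOn_mul (hucont.mono (ordConnected_Ioo.uIcc_subset hz hx)))).symm
  have hu'int : ∀ x ∈ Ioo a b, IntervalIntegrable (fun t => φ t * w t) volume z x := fun x hx =>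
    (intervalIntegrable_deriv_of_nonneg_Ioo hW hw hz hx).continuousOn_mul
      (hφ.mono (ordConnected_Ioo.uIcc_subset hz hx))
  have hO := isBigO_integral_abs_mul_deriv hz (hφ.continuousAt (Ioo_mem_nhds hz.1 hz.2)) hW hw
  exact ((hasDerivAt_integral_mul_deriv_of_isBigO hz hu hv hu'int (hv' z hz) hO).const_add
    _).congr_of_eventuallyEq (eventually_of_mem (Ioo_mem_nhds hz.1 hz.2) hsplit)

theorem hasDerivAt_integral_pow_mul_or_eq_zero {a b : ℝ} {F0 f0 FY fY A : ℝ → ℝ}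
    (hF0pos : ∀ y ∈ Ioo a b, 0 < F0 y) (hF0deriv : ∀ y ∈ Ioo a b, HasDerivAt F0 (f0 y) y)
    (hf0 : ∀ y ∈ Ioo a b, 0 ≤ f0 y) (hAderiv : ∀ y ∈ Ioo a b, HasDerivAt A (-(f0 y / F0 y)) y)
    (hFYderiv : ∀ y ∈ Ioo a b, HasDerivAt FY (fY y) y)
    (hfY : ∀ l ∈ Ioo a b, ∀ r ∈ Ioo a b, IntervalIntegrable fY volume l r) (k : ℕ) :
    (∀ z ∈ Ioo a b, HasDerivAt (fun x => ∫ t in a..x, A t ^ k * fY t) (A z ^ k * fY z) z) ∨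
      ∀ x ∈ Ioo a b, ∫ t in a..x, A t ^ k * fY t = 0 := by
  have hAcont : ContinuousOn A (Ioo a b) := fun t ht =>
    (hAderiv t ht).continuousAt.continuousWithinAt
  have hF0cont : ContinuousOn F0 (Ioo a b) := fun t ht =>
    (hF0deriv t ht).continuousAt.continuousWithinAt
  refine (intervalIntegrable_or_integral_eq_zero fun l hl r hr => ?_).imp_left
    fun hint z hz => ?_
  · exact (hfY l hl r hr).continuousOn_mul
      ((hAcont.pow k).mono (ordConnected_Ioo.uIcc_subset hl hr))
  refine hasDerivAt_integral_mul_deriv hz (φ := fun t => -(k * A t ^ (k - 1) / F0 t))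
    (fun t ht => ?_) ?_ hF0deriv hf0 hFYderiv hfY (hint z hz)
  · exact ((hAderiv t ht).fun_pow k).congr_deriv (by ring)
  · exact ((continuousOn_const.mul (hAcont.pow _)).div hF0cont fun t ht => (hF0pos t ht).ne').neg

section MomentRecursion

variable {a b θ : ℝ} {m : ℕ} {F0 f0 FY fY A : ℝ → ℝ} {M : ℕ → ℝ → ℝ}

theorem deriv_eq_of_moment_recursion
    (hAderiv : ∀ z ∈ Ioo a b, HasDerivAt A (-(f0 z / F0 z)) z)
    (hFYderiv : ∀ z ∈ Ioo a b, HasDerivAt FY (fY z) z)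
    (hrec : ∀ x ∈ Ioo a b, M (m + 1) x = A x ^ (m + 1) * FY x + (m + 1) / θ * M m x)
    {z dn dm : ℝ} (hz : z ∈ Ioo a b) (hn : HasDerivAt (M (m + 1)) dn z)
    (hm : HasDerivAt (M m) dm z) :
    dn = (m + 1) * A z ^ m * -(f0 z / F0 z) * FY z + A z ^ (m + 1) * fY z + (m + 1) / θ * dm := by
  have hΦ := ((hAderiv z hz).fun_pow (m + 1)).fun_mul (hFYderiv z hz)
  push_cast at hΦ
  exact hn.unique <| (hΦ.add (hm.const_mul _)).congr_of_eventuallyEq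
    (eventually_of_mem (Ioo_mem_nhds hz.1 hz.2) hrec)

theorem reversedHazard_eq_of_moment_recursion (hθ : 0 < θ)
    (hAderiv : ∀ z ∈ Ioo a b, HasDerivAt A (-(f0 z / F0 z)) z)
    (hFYderiv : ∀ z ∈ Ioo a b, HasDerivAt FY (fY z) z)
    (hrec : ∀ x ∈ Ioo a b, M (m + 1) x = A x ^ (m + 1) * FY x + (m + 1) / θ * M m x)
    {y : ℝ} (hy : y ∈ Ioo a b) (hA : 0 < A y) (hF0 : 0 < F0 y) (hFY : 0 < FY y)
    (hn : HasDerivAt (M (m + 1)) (A y ^ (m + 1) * fY y) y)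
    (hm : HasDerivAt (M m) (A y ^ m * fY y) y) :
    fY y / FY y = θ * (f0 y / F0 y) := by
  have h := deriv_eq_of_moment_recursion hAderiv hFYderiv hrec hy hn hm
  have key : ((m : ℝ) + 1) * A y ^ m * (fY y * F0 y - FY y * θ * f0 y) = 0 := by
    field_simp [hF0.ne', hθ.ne'] at h
    linear_combination -h
  field_simp [hFY.ne', hF0.ne']
  linear_combination (mul_eq_zero.1 key).resolve_left (by positivity)

theorem not_forall_moment_succ_eq_zero (hθ : 0 < θ)
    (hAderiv : ∀ z ∈ Ioo a b, HasDerivAt A (-(f0 z / F0 z)) z)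
    (hFYderiv : ∀ z ∈ Ioo a b, HasDerivAt FY (fY z) z)
    (hrec : ∀ x ∈ Ioo a b, M (m + 1) x = A x ^ (m + 1) * FY x + (m + 1) / θ * M m x)
    (hM : ∀ x, M m x = ∫ t in a..x, A t ^ m * fY t)
    (hMm : (∀ z ∈ Ioo a b, HasDerivAt (M m) (A z ^ m * fY z) z) ∨ ∀ x ∈ Ioo a b, M m x = 0)
    (hA : ∀ z ∈ Ioo a b, 0 < A z) (hF0 : ∀ z ∈ Ioo a b, 0 < F0 z)
    (hf0 : ∀ z ∈ Ioo a b, 0 ≤ f0 z) (hFY : ∀ z ∈ Ioo a b, 0 < FY z) {y : ℝ} (hy : y ∈ Ioo a b) :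
    ¬ ∀ x ∈ Ioo a b, M (m + 1) x = 0 := by
  intro h0
  have hneg : M m y < 0 := by
    have h := hrec y hy
    rw [h0 y hy] at h
    have : 0 < A y ^ (m + 1) * FY y := mul_pos (pow_pos (hA y hy) _) (hFY y hy)
    have : 0 < ((m : ℝ) + 1) / θ := by positivity
    nlinarith
  rcases hMm with hm | hm0
  · have hnonneg : ∀ z ∈ Ioo a b, 0 ≤ A z ^ m * fY z := fun z hz => by
      have h := deriv_eq_of_moment_recursion hAderiv hFYderiv hrec hz
        (hasDerivAt_zero_of_forall_mem_Ioo h0 hz) (hm z hz)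
      have := hA z hz
      have : 0 ≤ f0 z / F0 z * FY z :=
        mul_nonneg (div_nonneg (hf0 z hz) (hF0 z hz).le) (hFY z hz).le
      have hfactor : A z ^ m * fY z * (A z + (m + 1) / θ)
          = (m + 1) * A z ^ m * (f0 z / F0 z * FY z) := by
        rw [pow_succ] at h
        linear_combination -h
      refine nonneg_of_mul_nonneg_left ?_ (by positivity : 0 < A z + (m + 1) / θ)
      rw [hfactor]
      positivity
    have : 0 ≤ M m y := by
      rw [hM, integral_of_le hy.1.le]
      exact setIntegral_nonneg measurableSet_Ioc fun t ht => hnonneg t ⟨ht.1, ht.2.trans_lt hy.2⟩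
    linarith
  · linarith [hm0 y hy]

theorem not_forall_moment_eq_zero
    (hAderiv : ∀ z ∈ Ioo a b, HasDerivAt A (-(f0 z / F0 z)) z)
    (hFYderiv : ∀ z ∈ Ioo a b, HasDerivAt FY (fY z) z)
    (hrec : ∀ x ∈ Ioo a b, M (m + 1) x = A x ^ (m + 1) * FY x + (m + 1) / θ * M m x)
    (hn : ∀ z ∈ Ioo a b, HasDerivAt (M (m + 1)) (A z ^ (m + 1) * fY z) z)
    {z : ℝ} (hz : z ∈ Ioo a b) (hA : 0 < A z) (hF0 : 0 < F0 z) (hFY : 0 < FY z)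
    (hf0 : 0 < f0 z) :
    ¬ ∀ x ∈ Ioo a b, M m x = 0 := by
  intro h0
  have h := deriv_eq_of_moment_recursion hAderiv hFYderiv hrec hz (hn z hz)
    (hasDerivAt_zero_of_forall_mem_Ioo h0 hz)
  have : 0 < (m + 1) * A z ^ m * (f0 z / F0 z) * FY z := by positivity
  linarith

end MomentRecursion

theorem stmt7_general (a b : ℝ) (F0 f0 FY fY : ℝ → ℝ) (θ : ℝ) (hθ : 0 < θ)
    (n : ℕ) (hn : 1 ≤ n)
    (hF0pos : ∀ y ∈ Ioo a b, 0 < F0 y) (hF0lt : ∀ y ∈ Ioo a b, F0 y < 1)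
    (hF0deriv : ∀ y ∈ Ioo a b, HasDerivAt F0 (f0 y) y)
    (hF0mono : StrictMonoOn F0 (Ioo a b))
    (hFYpos : ∀ y ∈ Ioo a b, 0 < FY y)
    (hFYderiv : ∀ y ∈ Ioo a b, HasDerivAt FY (fY y) y)
    (hFYint : ∀ y ∈ Ioo a b, FY y = ∫ t in a..y, fY t)
    (A : ℝ → ℝ) (hA : ∀ y, A y = - Real.log (F0 y))
    (hrec : ∀ y ∈ Ioo a b,
      (∫ t in a..y, A t ^ n * fY t) / FY y
        = A y ^ n + ((n : ℝ) / θ) * ((∫ t in a..y, A t ^ (n - 1) * fY t) / FY y)) :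
    ∀ y ∈ Ioo a b, fY y / FY y = θ * (f0 y / F0 y) := by
  intro y hy
  obtain ⟨m, rfl⟩ := Nat.exists_eq_add_of_le' hn
  have hApos : ∀ z ∈ Ioo a b, 0 < A z := fun z hz => by
    rw [hA]
    exact neg_pos.2 (Real.log_neg (hF0pos z hz) (hF0lt z hz))
  have hAderiv : ∀ z ∈ Ioo a b, HasDerivAt A (-(f0 z / F0 z)) z := fun z hz => by
    rw [show A = fun y => -Real.log (F0 y) from funext hA]
    exact ((hF0deriv z hz).log (hF0pos z hz).ne').neg
  have hf0 : ∀ z ∈ Ioo a b, 0 ≤ f0 z := fun z hz =>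
    (hF0deriv z hz).nonneg_of_monotoneOn_of_mem_nhds (Ioo_mem_nhds hz.1 hz.2) hF0mono.monotoneOn
  have hfY : ∀ l ∈ Ioo a b, ∀ r ∈ Ioo a b, IntervalIntegrable fY volume l r := by
    have ha : ∀ x ∈ Ioo a b, IntervalIntegrable fY volume a x := fun x hx =>
      intervalIntegrable_of_integral_ne_zero (hFYint x hx ▸ (hFYpos x hx).ne')
    exact fun l hl r hr => (ha l hl).symm.trans (ha r hr)
  obtain ⟨M, hM⟩ : ∃ M : ℕ → ℝ → ℝ, ∀ k x, M k x = ∫ t in a..x, A t ^ k * fY t :=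
    ⟨_, fun _ _ => rfl⟩
  have hMk := hasDerivAt_integral_pow_mul_or_eq_zero hF0pos hF0deriv hf0 hAderiv hFYderiv hfY
  simp only [← hM, Nat.add_sub_cancel] at hrec hMk
  have hrec' : ∀ x ∈ Ioo a b, M (m + 1) x = A x ^ (m + 1) * FY x + (m + 1) / θ * M m x := by
    intro x hx
    have h := hrec x hx
    push_cast at h
    field_simp [(hFYpos x hx).ne'] at h ⊢
    linear_combination h
  have hMn := (hMk (m + 1)).resolve_right <| not_forall_moment_succ_eq_zero hθ hAderiv hFYderiv
    hrec' (hM m) (hMk m) hApos hF0pos hf0 hFYpos hy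
  obtain ⟨z, hz, hf0z⟩ := hF0mono.exists_hasDerivAt_pos (hy.1.trans hy.2) hF0deriv
  have hMm := (hMk m).resolve_right <| not_forall_moment_eq_zero hAderiv hFYderiv hrec' hMn hz
    (hApos z hz) (hF0pos z hz) (hFYpos z hz) hf0z
  exact reversedHazard_eq_of_moment_recursion hθ hAderiv hFYderiv hrec' hy (hApos y hy)
    (hF0pos y hy) (hFYpos y hy) (hMn y hy) (hMm y hy)

/-- Converse moment characterization: if for some fixed `n ≥ 1` the moment
recursion `E[A(Y)^n | Y ≤ y] = A(y)^n + (n/θ) E[A(Y)^{n-1} | Y ≤ y]` holds for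
all `y ∈ (a,b)`, then the reversed hazard rate of `Y` is `θ` times that of
`F₀`, i.e. `f_Y(y)/F_Y(y) = θ f₀(y)/F₀(y)`. -/
theorem stmt7 (a b : ℝ) (hab : a < b) (F0 f0 FY fY : ℝ → ℝ) (θ : ℝ) (hθ : 0 < θ)
    (n : ℕ) (hn : 1 ≤ n)
    (hF0pos : ∀ y ∈ Ioo a b, 0 < F0 y) (hF0lt : ∀ y ∈ Ioo a b, F0 y < 1)
    (hF0deriv : ∀ y ∈ Ioo a b, HasDerivAt F0 (f0 y) y)
    (hF0mono : StrictMonoOn F0 (Ioo a b))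
    (hFYpos : ∀ y ∈ Ioo a b, 0 < FY y)
    (hFYderiv : ∀ y ∈ Ioo a b, HasDerivAt FY (fY y) y)
    (hFYint : ∀ y ∈ Ioo a b, FY y = ∫ t in a..y, fY t)
    (A : ℝ → ℝ) (hA : ∀ y, A y = - Real.log (F0 y))
    (hrec : ∀ y ∈ Ioo a b,
      (∫ t in a..y, A t ^ n * fY t) / FY y
        = A y ^ n + ((n : ℝ) / θ) * ((∫ t in a..y, A t ^ (n - 1) * fY t) / FY y)) :
    ∀ y ∈ Ioo a b, fY y / FY y = θ * (f0 y / F0 y) :=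
  stmt7_general a b F0 f0 FY fY θ hθ n hn hF0pos hF0lt hF0deriv hF0mono hFYpos hFYderiv hFYint A hA
    hrec
end

section
/- Roy's representation: for an absolutely continuous bivariate CDF F on (a,b)² with F(b⁻,b⁻) = 1 and λ_i(y_i | Y_{3-i} ≤ y_{3-i}) = ∂ log F(y_1,y_2)/∂y_i, the distribution is recovered as F(y_1,y_2) = exp[ -∫_{y_1}^{b} λ_1(u | Y_2 ≤ b) du - ∫_{y_2}^{b} λ_2(v | Y_1 ≤ y_1) dv ]. -/
open Set intervalIntegral

theorem integral_eq_sub_of_hasDerivAt_of_continuousOn_Icc {f f' : ℝ → ℝ} {x y : ℝ}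
    (hxy : x ≤ y) (hf : ∀ t ∈ Icc x y, HasDerivAt f (f' t) t)
    (hf' : ContinuousOn f' (Icc x y)) :
    ∫ t in x..y, f' t = f y - f x := by
  rw [← uIcc_of_le hxy] at hf hf'
  exact integral_eq_sub_of_hasDerivAt hf hf'.intervalIntegrable

theorem stmt19_general (a b : ℝ) (F : ℝ → ℝ → ℝ)
    (hFpos : ∀ y1 ∈ Ioc a b, ∀ y2 ∈ Ioc a b, 0 < F y1 y2)
    (hFbb : F b b = 1)
    (y1 y2 : ℝ) (hy1 : y1 ∈ Ioo a b) (hy2 : y2 ∈ Ioo a b)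
    (lam1 lam2 : ℝ → ℝ)
    (hlam1 : ∀ u ∈ Icc y1 b, HasDerivAt (fun t => Real.log (F t b)) (lam1 u) u)
    (hlam2 : ∀ v ∈ Icc y2 b, HasDerivAt (fun t => Real.log (F y1 t)) (lam2 v) v)
    (hlam1c : ContinuousOn lam1 (Icc y1 b))
    (hlam2c : ContinuousOn lam2 (Icc y2 b)) :
    F y1 y2 = Real.exp (-(∫ u in y1..b, lam1 u) - ∫ v in y2..b, lam2 v) := by
  have hpos : 0 < F y1 y2 := hFpos y1 (Ioo_subset_Ioc_self hy1) y2 (Ioo_subset_Ioc_self hy2)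
  rw [integral_eq_sub_of_hasDerivAt_of_continuousOn_Icc hy1.2.le hlam1 hlam1c,
    integral_eq_sub_of_hasDerivAt_of_continuousOn_Icc hy2.2.le hlam2 hlam2c, hFbb,
    Real.log_one]
  calc F y1 y2 = Real.exp (Real.log (F y1 y2)) := (Real.exp_log hpos).symm
    _ = _ := by ring_nf

/-- Roy's representation: an absolutely continuous bivariate CDF `F` on `(a,b)²`
with `F(b,b) = 1` is recovered from its bivariate reversed hazard rates by
`F(y₁,y₂) = exp[-∫_{y₁}^b λ₁(u|Y₂ ≤ b) du - ∫_{y₂}^b λ₂(v|Y₁ ≤ y₁) dv]`. -/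
theorem stmt19 (a b : ℝ) (hab : a < b) (F : ℝ → ℝ → ℝ)
    (hFpos : ∀ y1 ∈ Ioc a b, ∀ y2 ∈ Ioc a b, 0 < F y1 y2)
    (hFbb : F b b = 1)
    (y1 y2 : ℝ) (hy1 : y1 ∈ Ioo a b) (hy2 : y2 ∈ Ioo a b)
    (lam1 lam2 : ℝ → ℝ)
    (hlam1 : ∀ u ∈ Icc y1 b, HasDerivAt (fun t => Real.log (F t b)) (lam1 u) u)
    (hlam2 : ∀ v ∈ Icc y2 b, HasDerivAt (fun t => Real.log (F y1 t)) (lam2 v) v)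
    (hlam1c : ContinuousOn lam1 (Icc y1 b))
    (hlam2c : ContinuousOn lam2 (Icc y2 b)) :
    F y1 y2 = Real.exp (-(∫ u in y1..b, lam1 u) - ∫ v in y2..b, lam2 v) :=
  stmt19_general a b F hFpos hFbb y1 y2 hy1 hy2 lam1 lam2 hlam1 hlam2 hlam1c hlam2c
end
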